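/- For the van der Corput function ψ, for any z₀ ∈ ℤ_{≥0}, k ∈ ℤ_{≥0}, and any 0 ≤ x < y < 1: | |{j ∈ [z₀, z₀+2^k) : ψ(j) ∈ [x,y)}| − 2^k·(y−x) | < 2. -/

import Mathlib

open Finset

/-- The van der Corput function `ψ`: binary digit reversal of the index.
(For `i ≥ 1` all binary digits of `i` have index `< i`, so summing over
`j < i` captures the full expansion; `ψ 0 = 0`.) -/
noncomputable def vdc (i : ℕ) : ℝ :=
  ∑ j ∈ Finset.range i, if i.testBit j then ((1 : ℝ) / 2) ^ (j + 1) else 0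

/-!
Splitting off the lowest `k` binary digits gives `2^k ψ(j) = r_k(j) + ψ(⌊j / 2^k⌋)`, where
`r_k(j) = bitRev k j < 2^k` has as its `k` binary digits the lowest `k` digits of `j` in reverse
order, and `ψ(⌊j / 2^k⌋) ∈ [0, 1)`. Since `r_k(j)` only depends on `j mod 2^k`, it maps every
window of `2^k` consecutive integers bijectively onto `{0, …, 2^k - 1}`. So `ψ(j) ∈ [x, y)` holds
for every `j` with `[r_k(j), r_k(j) + 1) ⊆ [2^k x, 2^k y)` and only for `j` with
`r_k(j) ∈ (2^k x - 1, 2^k y)`: the count is squeezed between two integer counts that differ from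
`2^k (y - x)` by less than `2`.
-/

lemma vdc_eq_sum_range {i N : ℕ} (h : i ≤ N) :
    vdc i = ∑ t ∈ range N, if i.testBit t then ((1 : ℝ) / 2) ^ (t + 1) else 0 := by
  refine sum_subset (range_subset_range.mpr h) fun t _ hti => ?_
  rw [mem_range, not_lt] at hti
  rw [Nat.testBit_eq_false_of_lt (hti.trans_lt Nat.lt_two_pow_self), if_neg Bool.false_ne_true]

lemma vdc_eq_half_add (j : ℕ) : vdc j = ((j % 2 : ℕ) + vdc (j / 2)) / 2 := by
  rw [vdc_eq_sum_range j.le_succ, sum_range_succ', vdc_eq_sum_range (Nat.div_le_self j 2), add_div,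
    sum_div, add_comm]
  congr 1
  · rcases Nat.mod_two_eq_zero_or_one j with h | h <;> simp [Nat.testBit_zero, h]
  · refine sum_congr rfl fun t _ => ?_
    rw [Nat.testBit_succ]
    split_ifs <;> ring

lemma vdc_nonneg (j : ℕ) : 0 ≤ vdc j :=
  sum_nonneg fun _ _ => by split <;> positivity

lemma vdc_lt_one (j : ℕ) : vdc j < 1 := by
  induction j using Nat.strong_induction_on with
  | _ j ih =>
    rcases j.eq_zero_or_pos with rfl | hj
    · simp [vdc]
    have hhalf := ih (j / 2) (Nat.div_lt_self hj one_lt_two)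
    have hbit : ((j % 2 : ℕ) : ℝ) ≤ 1 := by
      exact_mod_cast Nat.le_of_lt_succ (Nat.mod_lt j two_pos)
    rw [vdc_eq_half_add]
    linarith

def bitRev : ℕ → ℕ → ℕ
  | 0, _ => 0
  | k + 1, j => j % 2 * 2 ^ k + bitRev k (j / 2)

lemma bitRev_lt (k j : ℕ) : bitRev k j < 2 ^ k := by
  induction k generalizing j with
  | zero => simp [bitRev]
  | succ k ih =>
    have := ih (j / 2)
    rcases Nat.mod_two_eq_zero_or_one j with h | h <;> simp [bitRev, h, pow_succ] <;> omega

lemma bitRev_mod_two_pow (k j : ℕ) : bitRev k (j % 2 ^ k) = bitRev k j := by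
  induction k generalizing j with
  | zero => simp [bitRev]
  | succ k ih =>
    rw [bitRev, bitRev, pow_succ', Nat.mod_mul_right_div_self, ih,
      Nat.mod_mod_of_dvd _ (dvd_mul_right 2 _)]

lemma bitRev_injOn_range (k : ℕ) : Set.InjOn (bitRev k) (range (2 ^ k)) := by
  induction k with
  | zero => simp
  | succ k ih =>
    intro a ha b hb hab
    simp only [coe_range, Set.mem_Iio, pow_succ] at ha hb
    have hra := bitRev_lt k (a / 2)
    have hrb := bitRev_lt k (b / 2)
    have hbits : a % 2 = b % 2 ∧ bitRev k (a / 2) = bitRev k (b / 2) := by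
      rcases Nat.mod_two_eq_zero_or_one a with h | h <;>
        rcases Nat.mod_two_eq_zero_or_one b with h' | h' <;>
        simp [bitRev, h, h'] at hab ⊢ <;> omega
    have hhalf : a / 2 = b / 2 := ih (by simp; omega) (by simp; omega) hbits.2
    omega

lemma bitRev_injOn_Ico (z₀ k : ℕ) : Set.InjOn (bitRev k) (Ico z₀ (z₀ + 2 ^ k)) := by
  intro a ha b hb hab
  refine Nat.mod_injOn_Ico z₀ (2 ^ k) ha hb (bitRev_injOn_range k ?_ ?_ ?_)
  · simpa using Nat.mod_lt a (Nat.two_pow_pos k)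
  · simpa using Nat.mod_lt b (Nat.two_pow_pos k)
  · simpa only [bitRev_mod_two_pow] using hab

lemma image_bitRev_Ico (z₀ k : ℕ) : (Ico z₀ (z₀ + 2 ^ k)).image (bitRev k) = range (2 ^ k) :=
  eq_of_subset_of_card_le (image_subset_iff.2 fun j _ => mem_range.2 (bitRev_lt k j))
    (by rw [card_image_of_injOn (bitRev_injOn_Ico z₀ k)]; simp)

lemma two_pow_mul_vdc (k j : ℕ) : 2 ^ k * vdc j = bitRev k j + vdc (j / 2 ^ k) := by
  induction k generalizing j with
  | zero => simp [bitRev]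
  | succ k ih =>
    rw [pow_succ, mul_assoc, vdc_eq_half_add, mul_div_cancel₀ _ two_ne_zero, mul_add, ih,
      bitRev, pow_succ', ← Nat.div_div_eq_div_mul]
    push_cast
    ring

lemma add_mem_Ico_of_mem_Ico_ceil_floor {X Y δ : ℝ} {m : ℕ} (hδ : δ ∈ Set.Ico 0 1)
    (hm : m ∈ Ico ⌈X⌉₊ ⌊Y⌋₊) : m + δ ∈ Set.Ico X Y := by
  obtain ⟨hXm, hmY⟩ := mem_Ico.1 hm
  have hX : X ≤ m := Nat.ceil_le.1 hXm
  have hY : ((m + 1 : ℕ) : ℝ) ≤ Y := (Nat.le_floor_iff' m.succ_ne_zero).1 hmY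
  push_cast at hY
  exact ⟨by linarith [hδ.1], by linarith [hδ.2]⟩

lemma mem_Ico_ceil_of_add_mem_Ico {X Y δ : ℝ} {m : ℕ} (hδ : δ ∈ Set.Ico 0 1)
    (h : m + δ ∈ Set.Ico X Y) : m ∈ Ico (⌈X⌉₊ - 1) ⌈Y⌉₊ := by
  have hX : ⌈X⌉₊ ≤ m + 1 := Nat.ceil_le.2 (by push_cast; linarith [h.1, hδ.2])
  have hY : m < ⌈Y⌉₊ := Nat.lt_ceil.2 (by linarith [h.2, hδ.1])
  exact mem_Ico.2 ⟨by omega, hY⟩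

lemma abs_card_sub_lt_two {B : Finset ℕ} {X Y : ℝ} (hX : 0 ≤ X) (hXY : X ≤ Y)
    (hlow : Ico ⌈X⌉₊ ⌊Y⌋₊ ⊆ B) (hup : B ⊆ Ico (⌈X⌉₊ - 1) ⌈Y⌉₊) :
    |(#B : ℝ) - (Y - X)| < 2 := by
  have hlowℕ : ⌊Y⌋₊ ≤ #B + ⌈X⌉₊ := by
    have := card_le_card hlow; rw [Nat.card_Ico] at this; omega
  have hupℕ : #B + ⌈X⌉₊ ≤ ⌈Y⌉₊ + 1 := by
    have := card_le_card hup; have := Nat.ceil_mono hXY; rw [Nat.card_Ico] at *; omega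
  have hlowℝ : (⌊Y⌋₊ : ℝ) ≤ #B + ⌈X⌉₊ := by exact_mod_cast hlowℕ
  have hupℝ : (#B + ⌈X⌉₊ : ℝ) ≤ ⌈Y⌉₊ + 1 := by exact_mod_cast hupℕ
  have hY₁ := Nat.sub_one_lt_floor Y
  have hY₂ := Nat.ceil_lt_add_one (hX.trans hXY)
  have hX₁ := Nat.le_ceil X
  have hX₂ := Nat.ceil_lt_add_one hX
  rw [abs_lt]
  constructor <;> linarith

/-- `| |{j ∈ [z₀, z₀+2^k) : ψ(j) ∈ [x,y)}| − 2^k (y−x) | < 2`. -/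
theorem stmt_17 : ∀ (z₀ k : ℕ) (x y : ℝ), 0 ≤ x → x < y → y < 1 →
    |((((Finset.Ico z₀ (z₀ + 2 ^ k)).filter
        fun j => x ≤ vdc j ∧ vdc j < y).card : ℝ) - 2 ^ k * (y - x))| < 2 := by
  intro z₀ k x y hx hxy hy
  have hk : (0 : ℝ) < 2 ^ k := by positivity
  have hscale (j : ℕ) : (x ≤ vdc j ∧ vdc j < y) ↔
      (bitRev k j + vdc (j / 2 ^ k) : ℝ) ∈ Set.Ico (2 ^ k * x) (2 ^ k * y) := by
    rw [← two_pow_mul_vdc, Set.mem_Ico, mul_le_mul_iff_right₀ hk, mul_lt_mul_iff_right₀ hk]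
  have hfrac (j : ℕ) : vdc (j / 2 ^ k) ∈ Set.Ico 0 1 := ⟨vdc_nonneg _, vdc_lt_one _⟩
  have hfloor : ⌊2 ^ k * y⌋₊ ≤ 2 ^ k := Nat.floor_le_of_le (by push_cast; nlinarith)
  rw [← card_image_of_injOn ((bitRev_injOn_Ico z₀ k).mono (filter_subset _ _)), mul_sub]
  apply abs_card_sub_lt_two (by positivity) (by gcongr)
  · intro m hm
    have hmk : m ∈ range (2 ^ k) := mem_range.2 ((mem_Ico.1 hm).2.trans_le hfloor)
    obtain ⟨j, hj, rfl⟩ := mem_image.1 ((image_bitRev_Ico z₀ k).symm ▸ hmk)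
    exact mem_image_of_mem _
      (mem_filter.2 ⟨hj, (hscale j).2 (add_mem_Ico_of_mem_Ico_ceil_floor (hfrac j) hm)⟩)
  · intro m hm
    obtain ⟨j, hj, rfl⟩ := mem_image.1 hm
    exact mem_Ico_ceil_of_add_mem_Ico (hfrac j) ((hscale j).1 (mem_filter.1 hj).2)
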